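/- Let x, y in R^d, z = x+y. The single-sample hyperbolic estimator Ŝ_hyp = (1/2) exp(-(||x||²+||y||²)/2)(exp(ω^T z) + exp(-ω^T z)) for ω ~ N(0, I_d) is unbiased for exp(x^T y), and Var(Ŝ_hyp) = (1/2)(1 - exp(-||z||²)) · Var(Ŝ_+), where Ŝ_+ = exp(-(||x||²+||y||²)/2) exp(ω^T z). -/

import Mathlib

open MeasureTheory ProbabilityTheory

noncomputable def stdGaussian (d : ℕ) : Measure (Fin d → ℝ) :=
  Measure.pi fun _ => gaussianReal 0 1

/-!
With `a = exp (-(‖x‖² + ‖y‖²)/2)` and `X = ωᵀz`, the hyperbolic estimator is `a cosh X` and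
`Ŝ_+ = a exp X`. Since `X ~ N(0, ‖z‖²)`, the Gaussian moment generating function (a product over
the coordinates of `ω`) gives `E exp (tX) = exp (t²‖z‖²/2)`. Hence `E cosh X = exp (‖z‖²/2)`,
`E cosh² X = (E cosh 2X + 1)/2 = (exp (2‖z‖²) + 1)/2` and `E exp² X = exp (2‖z‖²)`, so with
`e = exp ‖z‖²` the two variances are `a²(e - 1)²/2` and `a² e (e - 1)`.
-/

open Real
open scoped NNReal

lemma sum_mul_const_mul_eq_mul_sum {ι : Type*} [Fintype ι] (t : ℝ) (ω c : ι → ℝ) :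
    ∑ i, ω i * (t * c i) = t * ∑ i, ω i * c i := by
  rw [Finset.mul_sum]
  exact Finset.sum_congr rfl fun i _ => by ring

section PiGaussian

variable {ι : Type*} [Fintype ι] (μ : ι → ℝ) (v : ι → ℝ≥0) (c : ι → ℝ)

lemma integrable_exp_sum_mul_pi_gaussianReal :
    Integrable (fun ω : ι → ℝ => exp (∑ i, ω i * c i))
      (Measure.pi fun i => gaussianReal (μ i) (v i)) := by
  simp_rw [exp_sum, mul_comm _ (c _)]
  exact Integrable.fintype_prod fun i => integrable_exp_mul_gaussianReal (c i)

lemma integral_exp_sum_mul_pi_gaussianReal :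
    ∫ ω, exp (∑ i, ω i * c i) ∂(Measure.pi fun i => gaussianReal (μ i) (v i)) =
      exp (∑ i, (μ i * c i + v i * c i ^ 2 / 2)) := by
  simp_rw [exp_sum]
  rw [integral_fintype_prod_eq_prod (fun i t => exp (t * c i))]
  refine Finset.prod_congr rfl fun i _ => ?_
  simpa only [mgf, mul_comm (c i)] using
    congrFun (mgf_fun_id_gaussianReal (μ := μ i) (v := v i)) (c i)

end PiGaussian

lemma cosh_sq_eq_cosh_two_mul (s : ℝ) : cosh s ^ 2 = (cosh (2 * s) + 1) / 2 := by
  linarith [cosh_sq s, cosh_two_mul s]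

instance (d : ℕ) : IsProbabilityMeasure (stdGaussian d) := by
  unfold _root_.stdGaussian; infer_instance

section StdGaussian

variable {d : ℕ} (c : Fin d → ℝ)

lemma integrable_exp_mul_sum_mul_stdGaussian (t : ℝ) :
    Integrable (fun ω => exp (t * ∑ i, ω i * c i)) (stdGaussian d) := by
  rw [_root_.stdGaussian]
  simpa only [sum_mul_const_mul_eq_mul_sum] using
    integrable_exp_sum_mul_pi_gaussianReal (fun _ => 0) (fun _ => 1) (fun i => t * c i)

lemma integral_exp_mul_sum_mul_stdGaussian (t : ℝ) :
    ∫ ω, exp (t * ∑ i, ω i * c i) ∂stdGaussian d = exp (t ^ 2 * (∑ i, c i ^ 2) / 2) := by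
  have h := integral_exp_sum_mul_pi_gaussianReal (fun _ => 0) (fun _ => 1) (fun i => t * c i)
  simp only [sum_mul_const_mul_eq_mul_sum, zero_mul, zero_add, NNReal.coe_one, one_mul,
    mul_pow] at h
  rw [_root_.stdGaussian, h, Finset.mul_sum, Finset.sum_div]

lemma integral_exp_sum_mul_stdGaussian :
    ∫ ω, exp (∑ i, ω i * c i) ∂stdGaussian d = exp ((∑ i, c i ^ 2) / 2) := by
  simpa only [one_mul, one_pow] using integral_exp_mul_sum_mul_stdGaussian c 1

lemma integral_exp_sum_mul_sq_stdGaussian :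
    ∫ ω, exp (∑ i, ω i * c i) ^ 2 ∂stdGaussian d = exp (2 * ∑ i, c i ^ 2) := by
  have h (s : ℝ) : exp s ^ 2 = exp (2 * s) := by rw [sq, ← exp_add, two_mul]
  simp_rw [h, integral_exp_mul_sum_mul_stdGaussian]
  ring_nf

lemma integrable_cosh_sum_mul_stdGaussian :
    Integrable (fun ω => cosh (∑ i, ω i * c i)) (stdGaussian d) := by
  have h₁ := integrable_exp_mul_sum_mul_stdGaussian c 1
  have h₂ := integrable_exp_mul_sum_mul_stdGaussian c (-1)
  simp only [one_mul, neg_one_mul] at h₁ h₂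
  simp_rw [cosh_eq]
  exact (h₁.add h₂).div_const 2

lemma integral_cosh_sum_mul_stdGaussian :
    ∫ ω, cosh (∑ i, ω i * c i) ∂stdGaussian d = exp ((∑ i, c i ^ 2) / 2) := by
  have h₁ := integrable_exp_mul_sum_mul_stdGaussian c 1
  have h₂ := integrable_exp_mul_sum_mul_stdGaussian c (-1)
  have e₁ := integral_exp_mul_sum_mul_stdGaussian c 1
  have e₂ := integral_exp_mul_sum_mul_stdGaussian c (-1)
  simp only [one_mul, neg_one_mul, one_pow, neg_one_sq] at h₁ h₂ e₁ e₂
  simp_rw [cosh_eq]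
  rw [integral_div, integral_add h₁ h₂, e₁, e₂]
  ring

lemma integral_cosh_sum_mul_sq_stdGaussian :
    ∫ ω, cosh (∑ i, ω i * c i) ^ 2 ∂stdGaussian d = (exp (2 * ∑ i, c i ^ 2) + 1) / 2 := by
  simp_rw [cosh_sq_eq_cosh_two_mul, ← sum_mul_const_mul_eq_mul_sum]
  rw [integral_div, integral_add (integrable_cosh_sum_mul_stdGaussian _) (integrable_const 1),
    integral_cosh_sum_mul_stdGaussian]
  simp only [integral_const, probReal_univ, smul_eq_mul, one_mul, mul_pow, ← Finset.mul_sum]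
  ring_nf

end StdGaussian

/-- The single-sample hyperbolic estimator
`Ŝ_hyp(ω) = (1/2) exp(-(‖x‖²+‖y‖²)/2)(exp(ωᵀz) + exp(-ωᵀz))`, `z = x + y`, `ω ~ N(0,I_d)`,
is unbiased for `exp(xᵀy)`, and its variance equals
`(1/2)(1 - exp(-‖z‖²))` times the variance of `Ŝ_+(ω) = exp(-(‖x‖²+‖y‖²)/2) exp(ωᵀz)`.
(Variances are written as second moment minus squared mean.) -/
theorem hyperbolic_estimator_unbiased_and_variance (d : ℕ) (x y : Fin d → ℝ) :
    (∫ ω, (1 / 2) * Real.exp (-((∑ i, x i ^ 2) + ∑ i, y i ^ 2) / 2) *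
        (Real.exp (∑ i, ω i * (x i + y i)) + Real.exp (-∑ i, ω i * (x i + y i)))
        ∂(stdGaussian d) = Real.exp (∑ i, x i * y i)) ∧
    ((∫ ω, ((1 / 2) * Real.exp (-((∑ i, x i ^ 2) + ∑ i, y i ^ 2) / 2) *
        (Real.exp (∑ i, ω i * (x i + y i)) + Real.exp (-∑ i, ω i * (x i + y i)))) ^ 2
        ∂(stdGaussian d)) -
      (∫ ω, (1 / 2) * Real.exp (-((∑ i, x i ^ 2) + ∑ i, y i ^ 2) / 2) *
        (Real.exp (∑ i, ω i * (x i + y i)) + Real.exp (-∑ i, ω i * (x i + y i)))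
        ∂(stdGaussian d)) ^ 2 =
      (1 / 2) * (1 - Real.exp (-∑ i, (x i + y i) ^ 2)) *
        ((∫ ω, (Real.exp (-((∑ i, x i ^ 2) + ∑ i, y i ^ 2) / 2) *
            Real.exp (∑ i, ω i * (x i + y i))) ^ 2 ∂(stdGaussian d)) -
          (∫ ω, Real.exp (-((∑ i, x i ^ 2) + ∑ i, y i ^ 2) / 2) *
            Real.exp (∑ i, ω i * (x i + y i)) ∂(stdGaussian d)) ^ 2)) := by
  set a := exp (-((∑ i, x i ^ 2) + ∑ i, y i ^ 2) / 2)
  have h_hyp (s : ℝ) : 1 / 2 * a * (exp s + exp (-s)) = a * cosh s := by rw [cosh_eq]; ring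
  simp_rw [h_hyp, mul_pow, integral_const_mul, integral_cosh_sum_mul_stdGaussian,
    integral_cosh_sum_mul_sq_stdGaussian, integral_exp_sum_mul_sq_stdGaussian,
    integral_exp_sum_mul_stdGaussian]
  set S := ∑ i, (x i + y i) ^ 2
  have h_mean : a * exp (S / 2) = exp (∑ i, x i * y i) := by
    have hS : S = (∑ i, x i ^ 2) + 2 * (∑ i, x i * y i) + ∑ i, y i ^ 2 := by
      simp only [S, Finset.mul_sum, ← Finset.sum_add_distrib]
      exact Finset.sum_congr rfl fun i _ => by ring
    rw [← exp_add, hS]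
    ring_nf
  refine ⟨h_mean, ?_⟩
  have h_half : exp (S / 2) ^ 2 = exp S := by rw [← exp_nat_mul]; ring_nf
  have h_double : exp (2 * S) = exp S ^ 2 := by rw [← exp_nat_mul]; ring_nf
  have h_inv : exp (-S) * exp S = 1 := by rw [← exp_add, neg_add_cancel, exp_zero]
  rw [mul_pow, h_half, h_double]
  linear_combination (a ^ 2 * (exp S - 1) / 2) * h_inv
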